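/- Let φ be an injective endomorphism of the free group F_n and let W be an attracting fixed point of φ, with length-p prefixes W_p. Then the word length of the reduced word W_p^{-1} φ(W_p) tends to infinity as p → ∞. -/

import Mathlib

open Filter

namespace ZZFix

/-- A letter: a basis element together with a sign. -/
abbrev Letter (α : Type*) := α × Bool

/-- The inverse letter. -/
def linv {α : Type*} (l : Letter α) : Letter α := (l.1, !l.2)

/-- An infinite reduced word: a sequence of letters with no adjacent cancellation. -/
def InfWord (α : Type*) : Type _ := {w : ℕ → Letter α // ∀ i, w (i + 1) ≠ linv (w i)}

/-- The length-`i` prefix of an infinite reduced word, as a list of letters. -/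
def prefixList {α : Type*} (W : InfWord α) (i : ℕ) : List (Letter α) :=
  (List.range i).map W.1

/-- The length-`i` prefix of an infinite reduced word, as an element of the free group. -/
def wordPrefix {α : Type*} (W : InfWord α) (i : ℕ) : FreeGroup α :=
  FreeGroup.mk (prefixList W i)

/-- Length of the longest common prefix of two lists. -/
def commonPrefixLength {β : Type*} [DecidableEq β] : List β → List β → ℕ
  | a :: as, b :: bs => if a = b then commonPrefixLength as bs + 1 else 0
  | _, _ => 0

variable {α : Type*} [DecidableEq α]

/-- `|W ∧ g|` for an infinite reduced word `W` and a finite reduced word `g`. -/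
def wedgeF (W : InfWord α) (g : FreeGroup α) : ℕ :=
  commonPrefixLength (prefixList W (FreeGroup.toWord g).length) (FreeGroup.toWord g)

/-- `|g ∧ h|` for finite reduced words. -/
def wedgeFF (g h : FreeGroup α) : ℕ :=
  commonPrefixLength (FreeGroup.toWord g) (FreeGroup.toWord h)

/-- `|W ∧ V|` for infinite reduced words, valued in `ℕ∞` (it is `⊤` iff `W = V`). -/
noncomputable def wedgeI {α : Type*} (W V : InfWord α) : ℕ∞ :=
  sSup ((fun i : ℕ => (i : ℕ∞)) '' {i : ℕ | prefixList W i = prefixList V i})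

/-- A sequence of group elements converges to the infinite reduced word `W`
(in the initial segment metric on `F ⊔ ∂F`). -/
def ConvergesTo (u : ℕ → FreeGroup α) (W : InfWord α) : Prop :=
  Tendsto (fun i => wedgeF W (u i)) atTop atTop

/-- `W` is a fixed infinite word of `φ`: `|W ∧ φ(W_i)| → ∞`. -/
def IsFixedInfWord (φ : FreeGroup α →* FreeGroup α) (W : InfWord α) : Prop :=
  Tendsto (fun i => wedgeF W (φ (wordPrefix W i))) atTop atTop

/-- `W` is an attracting fixed word of `φ`: it is fixed and `|W ∧ φ(W_i)| - i → +∞`. -/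
def IsAttractingFixedWord (φ : FreeGroup α →* FreeGroup α) (W : InfWord α) : Prop :=
  IsFixedInfWord φ W ∧
    Tendsto (fun i => (wedgeF W (φ (wordPrefix W i)) : ℤ) - (i : ℤ)) atTop atTop

/-- The fixed subgroup of an endomorphism. -/
def fixedSubgroup {G : Type*} [Group G] (φ : G →* G) : Subgroup G where
  carrier := {g | φ g = g}
  one_mem' := map_one φ
  mul_mem' := by
    intro a b ha hb
    simp only [Set.mem_setOf_eq] at *
    rw [map_mul, ha, hb]
  inv_mem' := by
    intro a ha
    simp only [Set.mem_setOf_eq] at *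
    rw [map_inv, ha]

/-- The rank (minimal number of generators) of a subgroup, valued in `ℕ∞`. -/
noncomputable def grpRank {G : Type*} [Group G] (H : Subgroup G) : ℕ∞ :=
  sInf {k : ℕ∞ | ∃ S : Finset G, Subgroup.closure (S : Set G) = H ∧ (S.card : ℕ∞) = k}

/-- Two infinite reduced words are equivalent (w.r.t. `φ`) if `W' = U·W` for some
`U ∈ fix(φ)`, i.e. the reduced products `U·W_i` converge to `W'`. -/
def EquivFixedWords (φ : FreeGroup α →* FreeGroup α) (W W' : InfWord α) : Prop :=
  ∃ U ∈ fixedSubgroup φ, ConvergesTo (fun i => U * wordPrefix W i) W'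

/-- `a(φ)`: the number of equivalence classes of attracting fixed words, in `ℕ∞`. -/
noncomputable def aCard (φ : FreeGroup α →* FreeGroup α) : ℕ∞ :=
  ENat.card (Quot fun (W W' : {W : InfWord α // IsAttractingFixedWord φ W}) =>
    EquivFixedWords φ W.1 W'.1)

/-- The inner automorphism `i_c : g ↦ c g c⁻¹`, as a monoid homomorphism. -/
def innerAut {G : Type*} [Group G] (c : G) : G →* G := (MulAut.conj c).toMonoidHom

/-- Two endomorphisms are similar if `ψ₂ = i_c ∘ ψ₁ ∘ i_c⁻¹` for some `c`. -/
def Similar {G : Type*} [Group G] (ψ₁ ψ₂ : G →* G) : Prop :=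
  ∃ c : G, ψ₂ = ((innerAut c).comp ψ₁).comp (innerAut c⁻¹)

/-- The trace of the endomorphism of `ℤⁿ` induced by `φ` on the abelianization. -/
def abTrace {n : ℕ} (φ : FreeGroup (Fin n) →* FreeGroup (Fin n)) : ℤ :=
  ∑ i : Fin n, Multiplicative.toAdd
    ((FreeGroup.lift fun k => Multiplicative.ofAdd (if k = i then (1 : ℤ) else 0))
      (φ (FreeGroup.of i)))

/-- The constant infinite reduced word `l l l ⋯`. -/
def constWord {α : Type*} (l : Letter α) : InfWord α :=
  ⟨fun _ => l, fun _ h => by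
    have h2 := congrArg Prod.snd h
    simp [linv] at h2⟩

/-- `W` is an attracting fixed point of `φ`: it is fixed, and there is `i₀` such that
every finite or infinite reduced word `V` with `|W ∧ V| ≥ i₀` satisfies
`|W ∧ φᵖ(V)| → ∞` as `p → ∞`. -/
def IsAttractingFixedPoint (φ : FreeGroup α →* FreeGroup α) (W : InfWord α) : Prop :=
  IsFixedInfWord φ W ∧
    ∃ i₀ : ℕ,
      (∀ g : FreeGroup α, i₀ ≤ wedgeF W g →
        Tendsto (fun p => wedgeF W ((⇑φ)^[p] g)) atTop atTop) ∧
      (∀ V : InfWord α, (i₀ : ℕ∞) ≤ wedgeI W V →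
        ∀ Vs : ℕ → InfWord α, Vs 0 = V →
          (∀ p, ConvergesTo (fun i => φ (wordPrefix (Vs p) i)) (Vs (p + 1))) →
          Tendsto (fun p => wedgeI W (Vs p)) atTop atTop)

open scoped Classical in
/-- The initial segment metric. -/
noncomputable def distIS {α : Type*} (W V : InfWord α) : ℝ :=
  if W = V then 0 else 1 / (1 + ((wedgeI W V).toNat : ℝ))

end ZZFix

/-!
If the lengths `|W_p⁻¹ φ(W_p)|` stayed bounded along a subsequence, then, balls in `F_n` being
finite, one value `u` would be taken at two indices `p < q` with `q - p ≥ i₀`. Then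
`g = W_q W_p⁻¹` is fixed by `φ`, and since multiplying by `W_p⁻¹` cancels at most `p` letters,
`g` begins with `W_{q-p}`, so `|W ∧ g| ≥ i₀`. But then `|W ∧ φᵏ(g)| = |W ∧ g|` is constant,
contradicting attraction.
-/

theorem List.IsSuffix.tail {β : Type*} {l₁ l₂ : List β} (h : l₁ <:+ l₂) :
    l₁.tail <:+ l₂.tail := by
  obtain ⟨t, rfl⟩ := h
  cases t with
  | nil => exact List.suffix_refl _
  | cons a t => exact (List.tail_suffix l₁).trans (List.suffix_append t l₁)

namespace FreeGroup

variable {α : Type*} [DecidableEq α]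

theorem tail_reduce_isSuffix_reduce_cons (a : α × Bool) (L : List (α × Bool)) :
    (reduce L).tail <:+ reduce (a :: L) := by
  rw [reduce.cons]
  rcases reduce L with _ | ⟨b, L'⟩
  · exact List.nil_suffix
  · dsimp only
    split_ifs
    · exact List.suffix_refl _
    · exact List.suffix_cons_iff.mpr (Or.inr (List.suffix_cons b L'))

theorem drop_reduce_isSuffix_reduce_append (A B : List (α × Bool)) :
    (reduce B).drop A.length <:+ reduce (A ++ B) := by
  induction A with
  | nil => exact List.suffix_refl _
  | cons a A ih =>
    rw [List.length_cons, ← List.drop_drop, List.drop_one]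
    exact ih.tail.trans (tail_reduce_isSuffix_reduce_cons a (A ++ B))

theorem drop_toWord_isSuffix_toWord_mul (x y : FreeGroup α) :
    y.toWord.drop x.toWord.length <:+ (x * y).toWord := by
  simpa only [toWord_mul, reduce_toWord] using drop_reduce_isSuffix_reduce_append x.toWord y.toWord

theorem take_toWord_isPrefix_toWord_mul (x y : FreeGroup α) :
    x.toWord.take (x.toWord.length - y.toWord.length) <+: (x * y).toWord := by
  have h := drop_toWord_isSuffix_toWord_mul y⁻¹ x⁻¹
  rw [← mul_inv_rev, toWord_inv, toWord_inv, toWord_inv, invRev_length, invRev,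
    List.drop_reverse, List.length_map, ← List.map_take, invRev, List.reverse_suffix] at h
  simpa only [List.map_map, Function.comp_def, Bool.not_not, List.map_id'] using
    h.map (fun g => (g.1, !g.2))

theorem exists_frequently_eq_of_not_tendsto_length [Finite α] {ι : Type*} {l : Filter ι}
    {u : ι → FreeGroup α} (h : ¬ Tendsto (fun i => (u i).toWord.length) l atTop) :
    ∃ g, ∃ᶠ i in l, u i = g := by
  obtain ⟨b, hb⟩ : ∃ b, ∃ᶠ i in l, (u i).toWord.length < b := by
    simpa only [tendsto_atTop, not_forall, Filter.not_eventually, not_le] using h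
  have hfin : {g : FreeGroup α | g.toWord.length < b}.Finite :=
    (List.finite_length_lt _ b).preimage toWord_injective.injOn
  obtain ⟨g, -, hg⟩ := (hfin.frequently_exists (p := fun g i => u i = g)).mp
    (hb.mono fun i hi => ⟨u i, hi, rfl⟩)
  exact ⟨g, hg⟩

end FreeGroup

theorem MonoidHom.map_mul_inv_eq_self_of_inv_mul_map_eq {G : Type*} [Group G] (φ : G →* G)
    {x y : G} (h : x⁻¹ * φ x = y⁻¹ * φ y) : φ (y * x⁻¹) = y * x⁻¹ := by
  rw [map_mul, map_inv, mul_inv_eq_iff_eq_mul, ← mul_inv_cancel_left x (φ x), h]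
  group

namespace ZZFix

theorem le_commonPrefixLength_of_isPrefix {β : Type*} [DecidableEq β] {P : List β} :
    ∀ {A B : List β}, P <+: A → P <+: B → P.length ≤ commonPrefixLength A B := by
  induction P with
  | nil => exact fun _ _ => Nat.zero_le _
  | cons p P ih =>
    rintro (_ | ⟨a, A⟩) (_ | ⟨b, B⟩) hA hB
    all_goals simp only [List.prefix_nil, List.cons_prefix_cons, reduceCtorEq] at hA hB
    obtain ⟨rfl, hA⟩ := hA
    obtain ⟨rfl, hB⟩ := hB
    simpa only [commonPrefixLength, if_true, List.length_cons, Nat.add_le_add_iff_right]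
      using ih hA hB

variable {α : Type*}

theorem length_prefixList (W : InfWord α) (i : ℕ) : (prefixList W i).length = i := by
  simp [prefixList]

theorem take_prefixList (W : InfWord α) {i j : ℕ} (h : i ≤ j) :
    (prefixList W j).take i = prefixList W i := by
  simp [prefixList, ← List.map_take, List.take_range, Nat.min_eq_left h]

theorem prefixList_isPrefix (W : InfWord α) {i j : ℕ} (h : i ≤ j) :
    prefixList W i <+: prefixList W j :=
  take_prefixList W h ▸ List.take_prefix i _

theorem isReduced_prefixList (W : InfWord α) (i : ℕ) :
    FreeGroup.IsReduced (prefixList W i) := by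
  rw [FreeGroup.IsReduced, prefixList, List.isChain_map, List.isChain_range]
  intro m _ hfst
  have hne := W.2 m
  revert hne hfst
  rcases W.1 m with ⟨a, _ | _⟩ <;> rcases W.1 (m + 1) with ⟨b, _ | _⟩ <;> simp [linv, eq_comm]

variable [DecidableEq α]

theorem toWord_wordPrefix (W : InfWord α) (i : ℕ) :
    (wordPrefix W i).toWord = prefixList W i := by
  rw [wordPrefix, FreeGroup.toWord_mk, (isReduced_prefixList W i).reduce_eq]

theorem le_wedgeF_of_prefixList_isPrefix (W : InfWord α) {g : FreeGroup α} {k : ℕ}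
    (h : prefixList W k <+: g.toWord) : k ≤ wedgeF W g := by
  have hk : k ≤ g.toWord.length := length_prefixList W k ▸ h.length_le
  simpa only [wedgeF, length_prefixList] using
    le_commonPrefixLength_of_isPrefix (prefixList_isPrefix W hk) h

theorem sub_le_wedgeF_mul_inv (W : InfWord α) (p q : ℕ) :
    q - p ≤ wedgeF W (wordPrefix W q * (wordPrefix W p)⁻¹) := by
  apply le_wedgeF_of_prefixList_isPrefix
  have h := FreeGroup.take_toWord_isPrefix_toWord_mul (wordPrefix W q) (wordPrefix W p)⁻¹
  rwa [FreeGroup.toWord_inv, FreeGroup.invRev_length, toWord_wordPrefix, toWord_wordPrefix,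
    length_prefixList, length_prefixList, take_prefixList W (Nat.sub_le q p)] at h

theorem IsAttractingFixedPoint.exists_forall_wedgeF_lt {φ : FreeGroup α →* FreeGroup α}
    {W : InfWord α} (hW : IsAttractingFixedPoint φ W) :
    ∃ i₀, ∀ g, φ g = g → wedgeF W g < i₀ := by
  obtain ⟨-, i₀, hattr, -⟩ := hW
  refine ⟨i₀, fun g hg => ?_⟩
  by_contra! hi₀
  have h := hattr g hi₀
  simp only [Function.iterate_fixed hg] at h
  exact not_tendsto_const_atTop _ _ h

theorem stmt18_general {n : ℕ} (φ : FreeGroup (Fin n) →* FreeGroup (Fin n))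
    (W : InfWord (Fin n))
    (hW : IsAttractingFixedPoint φ W) :
    Tendsto
      (fun p => (FreeGroup.toWord ((wordPrefix W p)⁻¹ * φ (wordPrefix W p))).length)
      atTop atTop := by
  obtain ⟨i₀, hfixed⟩ := hW.exists_forall_wedgeF_lt
  by_contra h
  obtain ⟨u, hu⟩ := FreeGroup.exists_frequently_eq_of_not_tendsto_length h
  obtain ⟨p, -, hp⟩ := frequently_atTop.mp hu 0
  obtain ⟨q, hpq, hq⟩ := frequently_atTop.mp hu (p + i₀)
  have hg := φ.map_mul_inv_eq_self_of_inv_mul_map_eq (hp.trans hq.symm)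
  have := sub_le_wedgeF_mul_inv W p q
  have := hfixed _ hg
  omega

/-- from the proof of Proposition 2.3: if `W` is an attracting fixed
point of `φ`, then `|W_p⁻¹ φ(W_p)| → ∞`. -/
theorem stmt18 {n : ℕ} (φ : FreeGroup (Fin n) →* FreeGroup (Fin n))
    (hφ : Function.Injective φ) (W : InfWord (Fin n))
    (hW : IsAttractingFixedPoint φ W) :
    Tendsto
      (fun p => (FreeGroup.toWord ((wordPrefix W p)⁻¹ * φ (wordPrefix W p))).length)
      atTop atTop :=
  stmt18_general φ W hW

end ZZFix
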